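/- Let g ∈ ℂ and suppose q₁, …, q_n : ℝ → ℂ, p₁,…,p_n : ℝ → ℂ satisfy the reduced Calogero–Painlevé II equations q_i' = p_i, p_i' = 2q_i³ + t q_i + g²/(4 q_i³) + 4g² Σ_{j≠i} q_i(q_i² + 3 q_j²)/(q_i² − q_j²)², with all q_i nonzero and q_i² pairwise distinct. Define Q̆_i = −2^{-1/3}(p_i/q_i − i g/(2 q_i²)), P̆_i = 2^{1/3} q_i², s = −2^{1/3} t. Then dP̆_i/ds = 2 P̆_i Q̆_i − i g and dQ̆_i/ds = P̆_i − Q̆_i² − s/2 + 4g² Σ_{j≠i} (P̆_i + 3P̆_j)/(P̆_i − P̆_j)³. -/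

import Mathlib

open Finset

/-- The cube root of 2. -/
noncomputable def c13 : ℝ := (2 : ℝ) ^ ((1 : ℝ) / 3)

/-- `Q̆_i = −2^{-1/3}(p_i/q_i − i g/(2 q_i²))` at `t = −s/2^{1/3}`. -/
noncomputable def Qc {n : ℕ} (g : ℂ) (p q : Fin n → ℝ → ℂ) (i : Fin n) (s : ℝ) : ℂ :=
  -(c13 : ℂ)⁻¹ * (p i (-s / c13) / q i (-s / c13)
    - Complex.I * g / (2 * q i (-s / c13) ^ 2))

/-- `P̆_i = 2^{1/3} q_i²` at `t = −s/2^{1/3}`. -/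
noncomputable def Pc {n : ℕ} (q : Fin n → ℝ → ℂ) (i : Fin n) (s : ℝ) : ℂ :=
  (c13 : ℂ) * q i (-s / c13) ^ 2

/-!
In the variables `u = q²` and `v = p/q − i g/(2q²)` the reduced equations become
`u' = 2uv + i g` and `v' = 2u + t − v² + 4g² Σ_{j≠i} (u_i + 3u_j)/(u_i − u_j)³`: the
`g²/(4q³)` term of the force is exactly what cancels against `v²`. The interaction is
homogeneous of degree `−2` in the `u_j`, so the rescaling `P̆ = c u`, `Q̆ = −v/c`,
`s = −c t` with `c³ = 2` turns this into the `n`-particle system.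
-/

theorem c13_pos : 0 < c13 := by
  unfold c13
  positivity

theorem c13_pow_three : (c13 : ℂ) ^ 3 = 2 := by
  have : c13 ^ 3 = 2 := by
    rw [c13, ← Real.rpow_natCast, ← Real.rpow_mul zero_le_two]
    norm_num
  exact_mod_cast this

theorem HasDerivAt.comp_neg_div {f : ℝ → ℂ} {f' : ℂ} {a s : ℝ} (hf : HasDerivAt f f' (-s / a)) :
    HasDerivAt (fun s => f (-s / a)) (-(a : ℂ)⁻¹ * f') s := by
  refine (hf.scomp s ((hasDerivAt_neg s).div_const a)).congr_deriv ?_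
  rw [Complex.real_smul]
  push_cast
  ring

noncomputable def calogeroForce {n : ℕ} (u : Fin n → ℂ) (i : Fin n) : ℂ :=
  ∑ j ∈ univ.erase i, (u i + 3 * u j) / (u i - u j) ^ 3

theorem calogeroForce_const_mul {n : ℕ} {c : ℂ} (hc : c ≠ 0) (u : Fin n → ℂ) (i : Fin n) :
    calogeroForce (fun j => c * u j) i = (c ^ 2)⁻¹ * calogeroForce u i := by
  rw [calogeroForce, calogeroForce, mul_sum]
  refine sum_congr rfl fun j _ => ?_
  rw [show c * u i - c * u j = c * (u i - u j) by ring, mul_pow]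
  field_simp

section Riccati

open Complex

noncomputable def riccatiVar (g : ℂ) (p q : ℝ → ℂ) (t : ℝ) : ℂ :=
  p t / q t - I * g / (2 * q t ^ 2)

variable {g : ℂ} {p q : ℝ → ℂ} {t : ℝ}

theorem hasDerivAt_sq_riccatiVar (hq : HasDerivAt q (p t) t) (h0 : q t ≠ 0) :
    HasDerivAt (fun t => q t ^ 2) (2 * q t ^ 2 * riccatiVar g p q t + I * g) t :=
  (hq.fun_pow 2).congr_deriv (by rw [riccatiVar]; field_simp; ring)

theorem hasDerivAt_riccatiVar {F : ℂ} (hq : HasDerivAt q (p t) t)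
    (hp : HasDerivAt p (2 * q t ^ 3 + t * q t + g ^ 2 / (4 * q t ^ 3) + q t * F) t)
    (h0 : q t ≠ 0) :
    HasDerivAt (riccatiVar g p q) (2 * q t ^ 2 + t - riccatiVar g p q t ^ 2 + F) t := by
  have h := (hp.div hq h0).sub ((hasDerivAt_const t (I * g)).div ((hq.fun_pow 2).const_mul 2)
    (mul_ne_zero two_ne_zero (pow_ne_zero 2 h0)))
  refine h.congr_deriv ?_
  rw [riccatiVar]
  field_simp
  linear_combination (4 * g ^ 2) * I_sq

end Riccati

theorem calogeroPII_reduction_general (n : ℕ) (g : ℂ) (p q : Fin n → ℝ → ℂ)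
    (hq : ∀ (i : Fin n) (t : ℝ), HasDerivAt (q i) (p i t) t)
    (hp : ∀ (i : Fin n) (t : ℝ), HasDerivAt (p i)
      (2 * q i t ^ 3 + (t : ℂ) * q i t + g ^ 2 / (4 * q i t ^ 3)
        + 4 * g ^ 2 * ∑ j ∈ univ.erase i,
            q i t * (q i t ^ 2 + 3 * q j t ^ 2) / (q i t ^ 2 - q j t ^ 2) ^ 3) t)
    (hne : ∀ (i : Fin n) (t : ℝ), q i t ≠ 0) :
    ∀ (i : Fin n) (s : ℝ),
      HasDerivAt (Pc q i) (2 * Pc q i s * Qc g p q i s - Complex.I * g) s ∧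
      HasDerivAt (Qc g p q i)
        (Pc q i s - (Qc g p q i s) ^ 2 - (s : ℂ) / 2
          + 4 * g ^ 2 * ∑ j ∈ univ.erase i,
              (Pc q i s + 3 * Pc q j s) / (Pc q i s - Pc q j s) ^ 3) s := by
  intro i s
  set t := -s / c13 with ht
  have hsum : ∑ j ∈ univ.erase i,
      q i t * (q i t ^ 2 + 3 * q j t ^ 2) / (q i t ^ 2 - q j t ^ 2) ^ 3
      = q i t * calogeroForce (fun j => q j t ^ 2) i := by
    simp only [calogeroForce, mul_sum, mul_div_assoc]
  have hp' : HasDerivAt (p i) (2 * q i t ^ 3 + t * q i t + g ^ 2 / (4 * q i t ^ 3)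
      + q i t * (4 * g ^ 2 * calogeroForce (fun j => q j t ^ 2) i)) t :=
    (hp i t).congr_deriv (by rw [hsum]; ring)
  have hu := ((hasDerivAt_sq_riccatiVar (g := g) (hq i t) (hne i t)).comp_neg_div).const_mul
    (c13 : ℂ)
  have hv := ((hasDerivAt_riccatiVar (hq i t) hp' (hne i t)).comp_neg_div).const_mul
    (-(c13 : ℂ)⁻¹)
  have hP : Pc q i s = c13 * q i t ^ 2 := rfl
  have hQ : Qc g p q i s = -(c13 : ℂ)⁻¹ * riccatiVar g (p i) (q i) t := rfl
  have hforce : ∑ j ∈ univ.erase i, (Pc q i s + 3 * Pc q j s) / (Pc q i s - Pc q j s) ^ 3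
      = ((c13 : ℂ) ^ 2)⁻¹ * calogeroForce (fun j => q j t ^ 2) i :=
    calogeroForce_const_mul (Complex.ofReal_ne_zero.2 c13_pos.ne') (fun j => q j t ^ 2) i
  have hs : (s : ℂ) = -c13 * t := by push_cast [ht]; field_simp [c13_pos.ne']
  constructor
  · refine hu.congr_deriv ?_
    rw [hP, hQ]
    field_simp [c13_pos.ne']
    ring
  · refine hv.congr_deriv ?_
    rw [hforce, hP, hQ, hs]
    field_simp [c13_pos.ne']
    linear_combination (-(2 * q i t ^ 2 + t)) * c13_pow_three

/-- The reduced 2n-particle Calogero–Painlevé II system maps to n-particle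
Calogero–Painlevé II with coupling 2g in the variables `(P̆, Q̆)`. -/
theorem calogeroPII_reduction (n : ℕ) (g : ℂ) (p q : Fin n → ℝ → ℂ)
    (hq : ∀ (i : Fin n) (t : ℝ), HasDerivAt (q i) (p i t) t)
    (hp : ∀ (i : Fin n) (t : ℝ), HasDerivAt (p i)
      (2 * q i t ^ 3 + (t : ℂ) * q i t + g ^ 2 / (4 * q i t ^ 3)
        + 4 * g ^ 2 * ∑ j ∈ univ.erase i,
            q i t * (q i t ^ 2 + 3 * q j t ^ 2) / (q i t ^ 2 - q j t ^ 2) ^ 3) t)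
    (hne : ∀ (i : Fin n) (t : ℝ), q i t ≠ 0)
    (hdist : ∀ (i j : Fin n) (t : ℝ), i ≠ j → q i t ^ 2 ≠ q j t ^ 2) :
    ∀ (i : Fin n) (s : ℝ),
      HasDerivAt (Pc q i) (2 * Pc q i s * Qc g p q i s - Complex.I * g) s ∧
      HasDerivAt (Qc g p q i)
        (Pc q i s - (Qc g p q i s) ^ 2 - (s : ℂ) / 2
          + 4 * g ^ 2 * ∑ j ∈ univ.erase i,
              (Pc q i s + 3 * Pc q j s) / (Pc q i s - Pc q j s) ^ 3) s :=
  calogeroPII_reduction_general n g p q hq hp hne
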